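/- Assume every buyer distribution and every seller distribution is regular. Let M = (x, p^B, p^S) be any implementable mechanism that is IR, BIC and ex-ante WBB. Then for every real α ≥ 0, GFT(M) ≤ sup over implementable allocations x' of Σ_{b,s} f(b)·g(s)·( Σ_{i=1}^{n} x'^B_i(b,s)·(b_i + α·φ_i(b_i)) − Σ_{j=1}^{m} x'^S_j(b,s)·(s_j + α·τ_j(s_j)) ). -/
import Mathlib


open Finset

namespace Stmt5

variable {n m : ℕ} {K : Fin n → ℕ} {K' : Fin m → ℕ}

/-- A buyer type profile. -/
abbrev ProfileB (K : Fin n → ℕ) := ∀ i, Fin (K i)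

/-- A seller type profile. -/
abbrev ProfileS (K' : Fin m → ℕ) := ∀ j, Fin (K' j)

/-- Expectation of `h` over the independent product of the buyers' distributions `f`
and the sellers' distributions `g`. -/
def Ex (f : ∀ i, Fin (K i) → ℝ) (g : ∀ j, Fin (K' j) → ℝ)
    (h : ProfileB K → ProfileS K' → ℝ) : ℝ :=
  ∑ b : ProfileB K, ∑ s : ProfileS K',
    ((∏ i, f i (b i)) * ∏ j, g j (s j)) * h b s

/-- `x` is implementable w.r.t. the feasibility constraint `F`. -/
def Implementable (F : Set (Finset (Fin n × Fin m)))
    (x : ProfileB K → ProfileS K' → Fin n × Fin m → ℝ) : Prop :=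
  ∀ b s, ∃ γ : Finset (Fin n × Fin m) → ℝ,
    (∀ M, 0 ≤ γ M) ∧ (∀ M, γ M ≠ 0 → M ∈ F) ∧ (∑ M, γ M = 1) ∧
    (∀ e, x b s e = ∑ M, γ M * (if e ∈ M then 1 else 0))

/-- Interim utility of buyer `i` with true type `t`, reporting `t'`. -/
def utilB (vB : ∀ i, Fin (K i) → ℝ)
    (f : ∀ i, Fin (K i) → ℝ) (g : ∀ j, Fin (K' j) → ℝ)
    (x : ProfileB K → ProfileS K' → Fin n × Fin m → ℝ)
    (pB : Fin n → ProfileB K → ProfileS K' → ℝ)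
    (i : Fin n) (t t' : Fin (K i)) : ℝ :=
  Ex f g (fun b s =>
    vB i t * (∑ j, x (Function.update b i t') s (i, j))
      - pB i (Function.update b i t') s)

/-- Interim utility of seller `j` with true type `t`, reporting `t'`. -/
def utilS (vS : ∀ j, Fin (K' j) → ℝ)
    (f : ∀ i, Fin (K i) → ℝ) (g : ∀ j, Fin (K' j) → ℝ)
    (x : ProfileB K → ProfileS K' → Fin n × Fin m → ℝ)
    (pS : Fin m → ProfileB K → ProfileS K' → ℝ)
    (j : Fin m) (t t' : Fin (K' j)) : ℝ :=
  Ex f g (fun b s =>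
    pS j b (Function.update s j t')
      - vS j t * (∑ i, x b (Function.update s j t') (i, j)))

/-- Buyer's Myerson virtual value. -/
noncomputable def phi (Ki : ℕ) (β f : Fin Ki → ℝ) (r : Fin Ki) : ℝ :=
  β r - ((if h : (r : ℕ) + 1 < Ki then β ⟨(r : ℕ) + 1, h⟩ else β r) - β r)
      * (∑ l ∈ Finset.Ioi r, f l) / f r

/-- Seller's Myerson virtual value. -/
noncomputable def tau (Kj : ℕ) (α g : Fin Kj → ℝ) (r : Fin Kj) : ℝ :=
  α r + (α r - (if 0 < (r : ℕ) then
        α ⟨(r : ℕ) - 1, Nat.lt_of_le_of_lt (Nat.sub_le _ _) r.isLt⟩ else α r))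
      * (∑ l ∈ Finset.Iio r, g l) / g r



variable (f : ∀ i, Fin (K i) → ℝ) (g : ∀ j, Fin (K' j) → ℝ)

lemma Ex_split (h : ProfileB K → ProfileS K' → ℝ) :
    Ex f g h = ∑ b : ProfileB K, (∏ i, f i (b i)) *
      (∑ s : ProfileS K', (∏ j, g j (s j)) * h b s) := by
  simp [Ex, Finset.mul_sum, mul_assoc]

lemma Ex_split' (h : ProfileB K → ProfileS K' → ℝ) :
    Ex f g h = ∑ s : ProfileS K', (∏ j, g j (s j)) *
      (∑ b : ProfileB K, (∏ i, f i (b i)) * h b s) := by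
  rw [Ex, Finset.sum_comm]
  congr 1; ext s
  rw [Finset.mul_sum]
  congr 1; ext b; ring

lemma sum_profileB_weight (hf1 : ∀ i, ∑ t, f i t = 1) :
    ∑ b : ProfileB K, ∏ i, f i (b i) = 1 := by
  classical
  rw [← Fintype.piFinset_univ, ← Finset.prod_univ_sum]
  simp [hf1]

lemma sum_profileS_weight (hg1 : ∀ j, ∑ t, g j t = 1) :
    ∑ s : ProfileS K', ∏ j, g j (s j) = 1 := by
  classical
  rw [← Fintype.piFinset_univ, ← Finset.prod_univ_sum]
  simp [hg1]

/-- Change of variables for the update of one buyer coordinate. -/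
lemma sum_updateB (hf1 : ∀ i, ∑ t, f i t = 1) (i : Fin n)
    (c : Fin (K i) → ℝ) (h : ProfileB K → ℝ) :
    ∑ t, f i t * c t * (∑ b : ProfileB K, (∏ i', f i' (b i')) * h (Function.update b i t))
      = ∑ b : ProfileB K, (∏ i', f i' (b i')) * (c (b i) * h b) := by
  classical
  have key : ∀ (t : Fin (K i)) (b : ProfileB K),
      f i (b i) * ∏ i', f i' (Function.update b i t i') = f i t * ∏ i', f i' (b i') := by
    intro t b
    have h1 : (fun i' => f i' (Function.update b i t i'))
        = Function.update (fun i' => f i' (b i')) i (f i t) := by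
      funext i'
      by_cases hii : i' = i
      · subst hii; simp
      · simp [Function.update_of_ne hii]
    calc f i (b i) * ∏ i', f i' (Function.update b i t i')
        = f i (b i) * ∏ i', Function.update (fun i' => f i' (b i')) i (f i t) i' := by
          rw [h1]
      _ = f i (b i) * (f i t * ∏ i' ∈ univ \ {i}, f i' (b i')) := by
          rw [Finset.prod_update_of_mem (Finset.mem_univ i)]
      _ = f i t * (f i (b i) * ∏ i' ∈ univ \ {i}, f i' (b i')) := by ring
      _ = f i t * ∏ i', f i' (b i') := by
          rw [Finset.prod_eq_mul_prod_sdiff_singleton_of_mem (Finset.mem_univ i)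
            (fun i' => f i' (b i'))]
  have σinv : Function.Involutive
      (fun p : Fin (K i) × ProfileB K => (p.2 i, Function.update p.2 i p.1)) := by
    intro p
    simp [Function.update_idem]
  let e := σinv.toPerm _
  have hsum : ∀ (G : Fin (K i) × ProfileB K → ℝ), ∑ p, G (e p) = ∑ p, G p :=
    fun G => Equiv.sum_comp e G
  calc ∑ t, f i t * c t * (∑ b : ProfileB K, (∏ i', f i' (b i')) * h (Function.update b i t))
      = ∑ p : Fin (K i) × ProfileB K,
          f i p.1 * c p.1 * ((∏ i', f i' (p.2 i')) * h (Function.update p.2 i p.1)) := by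
        rw [Fintype.sum_prod_type]
        congr 1; ext t; rw [Finset.mul_sum]
    _ = ∑ p : Fin (K i) × ProfileB K,
          f i (p.2 i) * c (p.2 i) * ((∏ i', f i' (Function.update p.2 i p.1 i')) * h
            (Function.update (Function.update p.2 i p.1) i (p.2 i))) := by
        rw [← hsum (fun p => f i p.1 * c p.1 *
          ((∏ i', f i' (p.2 i')) * h (Function.update p.2 i p.1)))]
        rfl
    _ = ∑ p : Fin (K i) × ProfileB K,
          f i p.1 * ((∏ i', f i' (p.2 i')) * (c (p.2 i) * h p.2)) := by
        congr 1; ext p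
        have := key p.1 p.2
        simp only [Function.update_idem, Function.update_eq_self]
        linear_combination (c (p.2 i) * h p.2) * this
    _ = (∑ t, f i t) * ∑ b : ProfileB K, (∏ i', f i' (b i')) * (c (b i) * h b) := by
        rw [Fintype.sum_prod_type, Finset.sum_mul]
        congr 1; ext t; rw [Finset.mul_sum]
    _ = ∑ b : ProfileB K, (∏ i', f i' (b i')) * (c (b i) * h b) := by
        rw [hf1 i, one_mul]

/-- Change of variables for the update of one seller coordinate. -/
lemma sum_updateS (hg1 : ∀ j, ∑ t, g j t = 1) (j : Fin m)
    (c : Fin (K' j) → ℝ) (h : ProfileS K' → ℝ) :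
    ∑ t, g j t * c t * (∑ s : ProfileS K', (∏ j', g j' (s j')) * h (Function.update s j t))
      = ∑ s : ProfileS K', (∏ j', g j' (s j')) * (c (s j) * h s) := by
  classical
  have key : ∀ (t : Fin (K' j)) (s : ProfileS K'),
      g j (s j) * ∏ j', g j' (Function.update s j t j') = g j t * ∏ j', g j' (s j') := by
    intro t s
    have h1 : (fun j' => g j' (Function.update s j t j'))
        = Function.update (fun j' => g j' (s j')) j (g j t) := by
      funext j'
      by_cases hjj : j' = j
      · subst hjj; simp
      · simp [Function.update_of_ne hjj]
    calc g j (s j) * ∏ j', g j' (Function.update s j t j')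
        = g j (s j) * ∏ j', Function.update (fun j' => g j' (s j')) j (g j t) j' := by
          rw [h1]
      _ = g j (s j) * (g j t * ∏ j' ∈ univ \ {j}, g j' (s j')) := by
          rw [Finset.prod_update_of_mem (Finset.mem_univ j)]
      _ = g j t * (g j (s j) * ∏ j' ∈ univ \ {j}, g j' (s j')) := by ring
      _ = g j t * ∏ j', g j' (s j') := by
          rw [Finset.prod_eq_mul_prod_sdiff_singleton_of_mem (Finset.mem_univ j)
            (fun j' => g j' (s j'))]
  have σinv : Function.Involutive
      (fun p : Fin (K' j) × ProfileS K' => (p.2 j, Function.update p.2 j p.1)) := by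
    intro p
    simp [Function.update_idem]
  let e := σinv.toPerm _
  have hsum : ∀ (G : Fin (K' j) × ProfileS K' → ℝ), ∑ p, G (e p) = ∑ p, G p :=
    fun G => Equiv.sum_comp e G
  calc ∑ t, g j t * c t * (∑ s : ProfileS K', (∏ j', g j' (s j')) * h (Function.update s j t))
      = ∑ p : Fin (K' j) × ProfileS K',
          g j p.1 * c p.1 * ((∏ j', g j' (p.2 j')) * h (Function.update p.2 j p.1)) := by
        rw [Fintype.sum_prod_type]
        congr 1; ext t; rw [Finset.mul_sum]
    _ = ∑ p : Fin (K' j) × ProfileS K',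
          g j (p.2 j) * c (p.2 j) * ((∏ j', g j' (Function.update p.2 j p.1 j')) * h
            (Function.update (Function.update p.2 j p.1) j (p.2 j))) := by
        rw [← hsum (fun p => g j p.1 * c p.1 *
          ((∏ j', g j' (p.2 j')) * h (Function.update p.2 j p.1)))]
        rfl
    _ = ∑ p : Fin (K' j) × ProfileS K',
          g j p.1 * ((∏ j', g j' (p.2 j')) * (c (p.2 j) * h p.2)) := by
        congr 1; ext p
        have := key p.1 p.2
        simp only [Function.update_idem, Function.update_eq_self]
        linear_combination (c (p.2 j) * h p.2) * this
    _ = (∑ t, g j t) * ∑ s : ProfileS K', (∏ j', g j' (s j')) * (c (s j) * h s) := by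
        rw [Fintype.sum_prod_type, Finset.sum_mul]
        congr 1; ext t; rw [Finset.mul_sum]
    _ = ∑ s : ProfileS K', (∏ j', g j' (s j')) * (c (s j) * h s) := by
        rw [hg1 j, one_mul]

lemma Ex_sub (h1 h2 : ProfileB K → ProfileS K' → ℝ) :
    Ex f g (fun b s => h1 b s - h2 b s) = Ex f g h1 - Ex f g h2 := by
  simp [Ex, mul_sub, Finset.sum_sub_distrib]

lemma Ex_smul (c : ℝ) (h : ProfileB K → ProfileS K' → ℝ) :
    Ex f g (fun b s => c * h b s) = c * Ex f g h := by
  simp [Ex, Finset.mul_sum, mul_left_comm]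

lemma Ex_add (h1 h2 : ProfileB K → ProfileS K' → ℝ) :
    Ex f g (fun b s => h1 b s + h2 b s) = Ex f g h1 + Ex f g h2 := by
  simp [Ex, mul_add, Finset.sum_add_distrib]

lemma Ex_mono (hf : ∀ i t, 0 < f i t) (hg : ∀ j t, 0 < g j t)
    (h1 h2 : ProfileB K → ProfileS K' → ℝ) (hle : ∀ b s, h1 b s ≤ h2 b s) :
    Ex f g h1 ≤ Ex f g h2 := by
  apply Finset.sum_le_sum
  intro b _
  apply Finset.sum_le_sum
  intro s _
  have hw : 0 ≤ (∏ i, f i (b i)) * ∏ j, g j (s j) :=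
    mul_nonneg (Finset.prod_nonneg fun i _ => (hf i (b i)).le)
      (Finset.prod_nonneg fun j _ => (hg j (s j)).le)
  exact mul_le_mul_of_nonneg_left (hle b s) hw

lemma Ex_const (hf1 : ∀ i, ∑ t, f i t = 1) (hg1 : ∀ j, ∑ t, g j t = 1) (c : ℝ) :
    Ex f g (fun _ _ => c) = c := by
  rw [Ex_split, show (∑ b : ProfileB K, (∏ i, f i (b i)) *
      ∑ s : ProfileS K', (∏ j, g j (s j)) * c) =
      ∑ b : ProfileB K, (∏ i, f i (b i)) * c from by
    congr 1; ext b; rw [← Finset.sum_mul, sum_profileS_weight g hg1, one_mul]]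
  rw [← Finset.sum_mul, sum_profileB_weight f hf1, one_mul]

lemma Ex_sum {ι : Type*} (u : Finset ι) (h : ι → ProfileB K → ProfileS K' → ℝ) :
    Ex f g (fun b s => ∑ i ∈ u, h i b s) = ∑ i ∈ u, Ex f g (h i) := by
  simp only [Ex, Finset.mul_sum]
  trans ∑ b : ProfileB K, ∑ i ∈ u, ∑ s : ProfileS K',
      ((∏ i', f i' (b i')) * ∏ j, g j (s j)) * h i b s
  · exact Finset.sum_congr rfl fun b _ => Finset.sum_comm
  · exact Finset.sum_comm

lemma impl_bounds {F : Set (Finset (Fin n × Fin m))}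
    {x : ProfileB K → ProfileS K' → Fin n × Fin m → ℝ} (hx : Implementable F x) :
    ∀ b s e, 0 ≤ x b s e ∧ x b s e ≤ 1 := by
  intro b s e
  obtain ⟨γ, hγ0, -, hγ1, hγx⟩ := hx b s
  rw [hγx e]
  constructor
  · exact Finset.sum_nonneg fun M _ => mul_nonneg (hγ0 M) (by positivity)
  · have h2 : ∀ M ∈ (univ : Finset (Finset (Fin n × Fin m))),
        γ M * (if e ∈ M then 1 else 0) ≤ γ M := by
      intro M _; by_cases hM : e ∈ M <;> simp [hM, hγ0 M]
    calc ∑ M, γ M * (if e ∈ M then 1 else 0) ≤ ∑ M, γ M := Finset.sum_le_sum h2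
      _ = 1 := hγ1

lemma Ex_congr {h1 h2 : ProfileB K → ProfileS K' → ℝ} (h : ∀ b s, h1 b s = h2 b s) :
    Ex f g h1 = Ex f g h2 := by
  unfold Ex
  exact Finset.sum_congr rfl fun b _ => Finset.sum_congr rfl fun s _ => by rw [h b s]

lemma Ex_mul_sub (c : ℝ) (A p : ProfileB K → ProfileS K' → ℝ) :
    Ex f g (fun b s => c * A b s - p b s) = c * Ex f g A - Ex f g p := by
  simp only [Ex, mul_sub, Finset.sum_sub_distrib, Finset.mul_sum]
  congr 1
  exact Finset.sum_congr rfl fun b _ => Finset.sum_congr rfl fun s _ => by ring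

lemma Ex_sub_mul (c : ℝ) (A p : ProfileB K → ProfileS K' → ℝ) :
    Ex f g (fun b s => p b s - c * A b s) = Ex f g p - c * Ex f g A := by
  simp only [Ex, mul_sub, Finset.sum_sub_distrib, Finset.mul_sum]
  congr 1
  exact Finset.sum_congr rfl fun b _ => Finset.sum_congr rfl fun s _ => by ring
lemma sum_Iio_comm {N : ℕ} (F : Fin N → Fin N → ℝ) :
    ∑ t, ∑ l ∈ Iio t, F t l = ∑ l, ∑ t ∈ Ioi l, F t l := by
  have h1 : ∀ t : Fin N, ∑ l ∈ Iio t, F t l = ∑ l, if l < t then F t l else 0 := by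
    intro t
    rw [show Iio t = univ.filter (· < t) by ext l; simp, Finset.sum_filter]
  have h2 : ∀ l : Fin N, ∑ t ∈ Ioi l, F t l = ∑ t, if l < t then F t l else 0 := by
    intro l
    rw [show Ioi l = univ.filter (l < ·) by ext t; simp, Finset.sum_filter]
  simp_rw [h1, h2]; exact Finset.sum_comm

lemma myerson_buyer (Ki : ℕ) (v fw X P : Fin Ki → ℝ) (hfw : ∀ t, 0 < fw t)
    (hBIC : ∀ t t', v t * X t' - P t' ≤ v t * X t - P t)
    (hIR : ∀ t, 0 ≤ v t * X t - P t) :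
    ∑ t, fw t * P t ≤ ∑ t, fw t * phi Ki v fw t * X t := by
  set U : Fin Ki → ℝ := fun t => v t * X t - P t with hU
  set D : Fin Ki → ℝ := fun r =>
    (if h : (r : ℕ) + 1 < Ki then v ⟨(r : ℕ) + 1, h⟩ else v r) - v r with hD
  have claim : ∀ (N : ℕ) (hN : N < Ki),
      ∑ l ∈ Iio (⟨N, hN⟩ : Fin Ki), D l * X l ≤ U ⟨N, hN⟩ := by
    intro N
    induction N with
    | zero =>
      intro h0
      have : Iio (⟨0, h0⟩ : Fin Ki) = ∅ := by
        ext l; simp [Fin.lt_def]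
      rw [this]; simp only [Finset.sum_empty]; exact hIR _
    | succ N ih =>
      intro hN
      have hN' : N < Ki := Nat.lt_of_succ_lt hN
      have hIio : Iio (⟨N+1, hN⟩ : Fin Ki) = insert ⟨N, hN'⟩ (Iio ⟨N, hN'⟩) := by
        ext l
        simp only [Finset.mem_Iio, Finset.mem_insert, Fin.lt_def, Fin.ext_iff, Fin.val_mk]
        omega
      rw [hIio, Finset.sum_insert (by simp)]
      have hDN : D ⟨N, hN'⟩ = v ⟨N+1, hN⟩ - v ⟨N, hN'⟩ := by
        simp only [hD]
        rw [dif_pos (show ((⟨N, hN'⟩ : Fin Ki) : ℕ) + 1 < Ki from hN)]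
      have step : U ⟨N, hN'⟩ + D ⟨N, hN'⟩ * X ⟨N, hN'⟩ ≤ U ⟨N+1, hN⟩ := by
        have := hBIC ⟨N+1, hN⟩ ⟨N, hN'⟩
        simp only [hU] at *
        rw [hDN]; ring_nf; ring_nf at this ⊢; nlinarith [this]
      have := ih hN'
      linarith
  have claim' : ∀ t : Fin Ki, ∑ l ∈ Iio t, D l * X l ≤ U t := fun t => by
    have := claim t.1 t.2; simpa using this
  have key : ∑ t, fw t * (∑ l ∈ Iio t, D l * X l) ≤ ∑ t, fw t * U t :=
    Finset.sum_le_sum fun t _ => by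
      have := claim' t; nlinarith [(hfw t).le, claim' t]
  have exch : ∑ t, fw t * (∑ l ∈ Iio t, D l * X l)
      = ∑ l, (∑ t ∈ Ioi l, fw t) * (D l * X l) := by
    have := sum_Iio_comm (fun t l => fw t * (D l * X l))
    simp_rw [Finset.mul_sum] at this ⊢
    rw [this]
    congr 1; ext l; rw [Finset.sum_mul]
  have hphi : ∀ t, fw t * phi Ki v fw t * X t
      = fw t * v t * X t - (∑ l ∈ Ioi t, fw l) * (D t * X t) := by
    intro t
    have hne : fw t ≠ 0 := (hfw t).ne'
    simp only [phi, hD]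
    field_simp
  have : ∑ t, fw t * P t = ∑ t, fw t * v t * X t - ∑ t, fw t * U t := by
    simp only [hU]; rw [← Finset.sum_sub_distrib]; congr 1; ext t; ring
  rw [this]
  calc ∑ t, fw t * v t * X t - ∑ t, fw t * U t
      ≤ ∑ t, fw t * v t * X t - ∑ t, fw t * (∑ l ∈ Iio t, D l * X l) := by linarith
    _ = ∑ t, fw t * phi Ki v fw t * X t := by
        rw [exch, ← Finset.sum_sub_distrib]
        congr 1; ext t; rw [hphi t]

lemma myerson_seller (Kj : ℕ) (v gw X P : Fin Kj → ℝ) (hgw : ∀ t, 0 < gw t)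
    (hBIC : ∀ t t', P t' - v t * X t' ≤ P t - v t * X t)
    (hIR : ∀ t, 0 ≤ P t - v t * X t) :
    ∑ t, gw t * tau Kj v gw t * X t ≤ ∑ t, gw t * P t := by
  set U : Fin Kj → ℝ := fun t => P t - v t * X t with hU
  set D : Fin Kj → ℝ := fun r => v r -
    (if 0 < (r : ℕ) then
        v ⟨(r : ℕ) - 1, Nat.lt_of_le_of_lt (Nat.sub_le _ _) r.isLt⟩ else v r) with hD
  have claim : ∀ (d N : ℕ) (hN : N < Kj), Kj - 1 - N ≤ d →
      ∑ l ∈ Ioi (⟨N, hN⟩ : Fin Kj), D l * X l ≤ U ⟨N, hN⟩ := by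
    intro d
    induction d with
    | zero =>
      intro N hN hd
      have : Ioi (⟨N, hN⟩ : Fin Kj) = ∅ := by
        ext l
        simp only [Finset.mem_Ioi, Finset.notMem_empty, iff_false, Fin.lt_def, Fin.val_mk,
          not_lt]
        omega
      rw [this]; simp only [Finset.sum_empty]; exact hIR _
    | succ d ih =>
      intro N hN hd
      by_cases hcase : Kj - 1 - N ≤ d
      · exact ih N hN hcase
      · have hN1 : N + 1 < Kj := by omega
        have hIoi : Ioi (⟨N, hN⟩ : Fin Kj) = insert ⟨N+1, hN1⟩ (Ioi ⟨N+1, hN1⟩) := by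
          ext l
          simp only [Finset.mem_Ioi, Finset.mem_insert, Fin.lt_def, Fin.ext_iff, Fin.val_mk]
          omega
        rw [hIoi, Finset.sum_insert (by simp)]
        have hDN : D ⟨N+1, hN1⟩ = v ⟨N+1, hN1⟩ - v ⟨N, hN⟩ := by
          simp only [hD]
          rw [if_pos (by simp : 0 < ((⟨N+1, hN1⟩ : Fin Kj) : ℕ))]
          congr 1
        have step : U ⟨N+1, hN1⟩ + D ⟨N+1, hN1⟩ * X ⟨N+1, hN1⟩ ≤ U ⟨N, hN⟩ := by
          have := hBIC ⟨N, hN⟩ ⟨N+1, hN1⟩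
          simp only [hU] at *
          rw [hDN]; nlinarith [this]
        have := ih (N+1) hN1 (by omega)
        linarith
  have claim' : ∀ t : Fin Kj, ∑ l ∈ Ioi t, D l * X l ≤ U t := fun t => by
    have := claim (Kj - 1 - t.1) t.1 t.2 le_rfl; simpa using this
  have key : ∑ t, gw t * (∑ l ∈ Ioi t, D l * X l) ≤ ∑ t, gw t * U t :=
    Finset.sum_le_sum fun t _ => by nlinarith [(hgw t).le, claim' t]
  have exch : ∑ t, gw t * (∑ l ∈ Ioi t, D l * X l)
      = ∑ l, (∑ t ∈ Iio l, gw t) * (D l * X l) := by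
    have := sum_Iio_comm (fun l t => gw t * (D l * X l))
    simp_rw [Finset.mul_sum] at this ⊢
    rw [← this]
    congr 1; ext l; rw [Finset.sum_mul]
  have htau : ∀ t, gw t * tau Kj v gw t * X t
      = gw t * v t * X t + (∑ l ∈ Iio t, gw l) * (D t * X t) := by
    intro t
    have hne : gw t ≠ 0 := (hgw t).ne'
    simp only [tau, hD]
    field_simp
  have hsum : ∑ t, gw t * tau Kj v gw t * X t
      = ∑ t, gw t * v t * X t + ∑ t, gw t * (∑ l ∈ Ioi t, D l * X l) := by
    rw [exch, ← Finset.sum_add_distrib]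
    congr 1; ext t; rw [htau t]
  rw [hsum]
  have : ∑ t, gw t * P t = ∑ t, gw t * v t * X t + ∑ t, gw t * U t := by
    simp only [hU]; rw [← Finset.sum_add_distrib]; congr 1; ext t; ring
  rw [this]
  linarith

lemma buyer_key (vB : ∀ i, Fin (K i) → ℝ)
    (hf : ∀ i t, 0 < f i t) (hf1 : ∀ i, ∑ t, f i t = 1)
    (x : ProfileB K → ProfileS K' → Fin n × Fin m → ℝ)
    (pB : Fin n → ProfileB K → ProfileS K' → ℝ) (i : Fin n)
    (hBIC : ∀ t t', utilB vB f g x pB i t t' ≤ utilB vB f g x pB i t t)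
    (hIR : ∀ t, 0 ≤ utilB vB f g x pB i t t) :
    Ex f g (fun b s => pB i b s)
      ≤ Ex f g (fun b s => phi (K i) (vB i) (f i) (b i) * ∑ j, x b s (i, j)) := by
  classical
  set Φ : Fin (K i) → ℝ := phi (K i) (vB i) (f i) with hΦ
  set XB : Fin (K i) → ℝ :=
    fun t => Ex f g (fun b s => ∑ j, x (Function.update b i t) s (i, j)) with hXB
  set PB : Fin (K i) → ℝ :=
    fun t => Ex f g (fun b s => pB i (Function.update b i t) s) with hPB
  have hdecomp : ∀ t t', utilB vB f g x pB i t t' = vB i t * XB t' - PB t' :=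
    fun t t' => Ex_mul_sub f g _ _ _
  have hmy : ∑ t, f i t * PB t ≤ ∑ t, f i t * Φ t * XB t :=
    myerson_buyer (K i) (vB i) (f i) XB PB (hf i)
      (fun t t' => by
        have := hBIC t t'; rw [hdecomp t t', hdecomp t t] at this; exact this)
      (fun t => by have := hIR t; rw [hdecomp t t] at this; exact this)
  have hL : Ex f g (fun b s => pB i b s) = ∑ t, f i t * PB t := by
    have h1 := sum_updateB f hf1 i (fun _ => 1)
      (fun b => ∑ s : ProfileS K', (∏ j, g j (s j)) * pB i b s)
    simp only [mul_one, one_mul] at h1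
    rw [Ex_split, ← h1]
    exact Finset.sum_congr rfl fun t _ => by
      simp only [hPB]; rw [Ex_split]
  have hR : Ex f g (fun b s => Φ (b i) * ∑ j, x b s (i, j)) = ∑ t, f i t * Φ t * XB t := by
    have h1 := sum_updateB f hf1 i Φ
      (fun b => ∑ s : ProfileS K', (∏ j, g j (s j)) * ∑ j, x b s (i, j))
    rw [Ex_split, show (∑ b : ProfileB K, (∏ i', f i' (b i')) *
        ∑ s : ProfileS K', (∏ j, g j (s j)) * (Φ (b i) * ∑ j, x b s (i, j)))
        = ∑ b : ProfileB K, (∏ i', f i' (b i')) *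
          (Φ (b i) * ∑ s : ProfileS K', (∏ j, g j (s j)) * ∑ j, x b s (i, j)) from
      by
        simp only [Finset.mul_sum]
        exact Finset.sum_congr rfl fun b _ => Finset.sum_congr rfl fun s _ =>
          Finset.sum_congr rfl fun j' _ => by ring]
    rw [← h1]
    exact Finset.sum_congr rfl fun t _ => by
      simp only [hXB]; rw [Ex_split]
  rw [hL, hR]
  exact hmy

lemma seller_key (vS : ∀ j, Fin (K' j) → ℝ)
    (hg : ∀ j t, 0 < g j t) (hg1 : ∀ j, ∑ t, g j t = 1)
    (x : ProfileB K → ProfileS K' → Fin n × Fin m → ℝ)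
    (pS : Fin m → ProfileB K → ProfileS K' → ℝ) (j : Fin m)
    (hBIC : ∀ t t', utilS vS f g x pS j t t' ≤ utilS vS f g x pS j t t)
    (hIR : ∀ t, 0 ≤ utilS vS f g x pS j t t) :
    Ex f g (fun b s => tau (K' j) (vS j) (g j) (s j) * ∑ i, x b s (i, j))
      ≤ Ex f g (fun b s => pS j b s) := by
  classical
  set T : Fin (K' j) → ℝ := tau (K' j) (vS j) (g j) with hT
  set XS : Fin (K' j) → ℝ :=
    fun t => Ex f g (fun b s => ∑ i, x b (Function.update s j t) (i, j)) with hXS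
  set PS : Fin (K' j) → ℝ :=
    fun t => Ex f g (fun b s => pS j b (Function.update s j t)) with hPS
  have hdecomp : ∀ t t', utilS vS f g x pS j t t' = PS t' - vS j t * XS t' :=
    fun t t' => Ex_sub_mul f g _ _ _
  have hmy : ∑ t, g j t * T t * XS t ≤ ∑ t, g j t * PS t :=
    myerson_seller (K' j) (vS j) (g j) XS PS (hg j)
      (fun t t' => by
        have := hBIC t t'; rw [hdecomp t t', hdecomp t t] at this; exact this)
      (fun t => by have := hIR t; rw [hdecomp t t] at this; exact this)
  have hL : Ex f g (fun b s => pS j b s) = ∑ t, g j t * PS t := by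
    have h1 := sum_updateS g hg1 j (fun _ => 1)
      (fun s => ∑ b : ProfileB K, (∏ i, f i (b i)) * pS j b s)
    simp only [mul_one, one_mul] at h1
    rw [Ex_split', ← h1]
    exact Finset.sum_congr rfl fun t _ => by
      simp only [hPS]; rw [Ex_split']
  have hR : Ex f g (fun b s => T (s j) * ∑ i, x b s (i, j)) = ∑ t, g j t * T t * XS t := by
    have h1 := sum_updateS g hg1 j T
      (fun s => ∑ b : ProfileB K, (∏ i, f i (b i)) * ∑ i, x b s (i, j))
    rw [Ex_split', show (∑ s : ProfileS K', (∏ j', g j' (s j')) *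
        ∑ b : ProfileB K, (∏ i, f i (b i)) * (T (s j) * ∑ i, x b s (i, j)))
        = ∑ s : ProfileS K', (∏ j', g j' (s j')) *
          (T (s j) * ∑ b : ProfileB K, (∏ i, f i (b i)) * ∑ i, x b s (i, j)) from
      by
        simp only [Finset.mul_sum]
        exact Finset.sum_congr rfl fun s _ => Finset.sum_congr rfl fun b _ =>
          Finset.sum_congr rfl fun i' _ => by ring]
    rw [← h1]
    exact Finset.sum_congr rfl fun t _ => by
      simp only [hXS]; rw [Ex_split']
  rw [hL, hR]
  exact hmy

/-- in a double auction with regular distributions, the GFT of any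
implementable, IR, BIC, ex-ante WBB mechanism is at most, for every `α ≥ 0`, the sup over
implementable allocations `x'` of
`E_{b,s}[ Σ_i x'^B_i(b,s)(b_i + α φ_i(b_i)) − Σ_j x'^S_j(b,s)(s_j + α τ_j(s_j)) ]`. -/
theorem stmt_5
    (n m : ℕ) (hn : 0 < n) (hm : 0 < m)
    (K : Fin n → ℕ) (hK : ∀ i, 0 < K i)
    (K' : Fin m → ℕ) (hK' : ∀ j, 0 < K' j)
    (vB : ∀ i, Fin (K i) → ℝ) (hvB : ∀ i, StrictMono (vB i))
    (vS : ∀ j, Fin (K' j) → ℝ) (hvS : ∀ j, StrictMono (vS j))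
    (f : ∀ i, Fin (K i) → ℝ) (hf : ∀ i t, 0 < f i t) (hf1 : ∀ i, ∑ t, f i t = 1)
    (g : ∀ j, Fin (K' j) → ℝ) (hg : ∀ j t, 0 < g j t) (hg1 : ∀ j, ∑ t, g j t = 1)
    (hregB : ∀ i, Monotone (phi (K i) (vB i) (f i)))
    (hregS : ∀ j, Monotone (tau (K' j) (vS j) (g j)))
    (F : Set (Finset (Fin n × Fin m))) (hFne : F.Nonempty)
    (hdc : ∀ M ∈ F, ∀ M' ⊆ M, M' ∈ F)
    (hmatch : ∀ M ∈ F, ∀ e ∈ M, ∀ e' ∈ M, e ≠ e' → e.1 ≠ e'.1 ∧ e.2 ≠ e'.2)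
    (x : ProfileB K → ProfileS K' → Fin n × Fin m → ℝ)
    (pB : Fin n → ProfileB K → ProfileS K' → ℝ)
    (pS : Fin m → ProfileB K → ProfileS K' → ℝ)
    (himpl : Implementable F x)
    (hBICb : ∀ (i : Fin n) (t t' : Fin (K i)),
      utilB vB f g x pB i t t' ≤ utilB vB f g x pB i t t)
    (hBICs : ∀ (j : Fin m) (t t' : Fin (K' j)),
      utilS vS f g x pS j t t' ≤ utilS vS f g x pS j t t)
    (hIRb : ∀ (i : Fin n) (t : Fin (K i)), 0 ≤ utilB vB f g x pB i t t)
    (hIRs : ∀ (j : Fin m) (t : Fin (K' j)), 0 ≤ utilS vS f g x pS j t t)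
    (hWBB : 0 ≤ Ex f g (fun b s => (∑ i, pB i b s) - ∑ j, pS j b s)) :
    ∀ α : ℝ, 0 ≤ α →
      Ex f g (fun b s => ∑ i, ∑ j, x b s (i, j) * (vB i (b i) - vS j (s j)))
        ≤ sSup {y : ℝ | ∃ x' : ProfileB K → ProfileS K' → Fin n × Fin m → ℝ,
            Implementable F x' ∧
            y = Ex f g (fun b s =>
              (∑ i, (∑ j, x' b s (i, j))
                  * (vB i (b i) + α * phi (K i) (vB i) (f i) (b i)))
                - ∑ j, (∑ i, x' b s (i, j))
                  * (vS j (s j) + α * tau (K' j) (vS j) (g j) (s j)))} := by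
  intro α hα
  classical
  have hbuy : ∀ i, Ex f g (fun b s => pB i b s)
      ≤ Ex f g (fun b s => phi (K i) (vB i) (f i) (b i) * ∑ j, x b s (i, j)) :=
    fun i => buyer_key f g vB hf hf1 x pB i (hBICb i) (hIRb i)
  have hsell : ∀ j, Ex f g (fun b s => tau (K' j) (vS j) (g j) (s j) * ∑ i, x b s (i, j))
      ≤ Ex f g (fun b s => pS j b s) :=
    fun j => seller_key f g vS hg hg1 x pS j (hBICs j) (hIRs j)
  have hkey : 0 ≤ Ex f g (fun b s =>
      (∑ i, phi (K i) (vB i) (f i) (b i) * ∑ j, x b s (i, j))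
        - ∑ j, tau (K' j) (vS j) (g j) (s j) * ∑ i, x b s (i, j)) := by
    rw [Ex_sub, Ex_sum, Ex_sum]
    have hW : Ex f g (fun b s => (∑ i, pB i b s) - ∑ j, pS j b s)
        = (∑ i, Ex f g (fun b s => pB i b s)) - ∑ j, Ex f g (fun b s => pS j b s) := by
      rw [Ex_sub, Ex_sum, Ex_sum]
    have h1 := Finset.sum_le_sum (fun i (_ : i ∈ (univ : Finset (Fin n))) => hbuy i)
    have h2 := Finset.sum_le_sum (fun j (_ : j ∈ (univ : Finset (Fin m))) => hsell j)
    rw [hW] at hWBB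
    linarith
  have hptw : ∀ b s,
      (∑ i, (∑ j, x b s (i, j)) * (vB i (b i) + α * phi (K i) (vB i) (f i) (b i)))
        - ∑ j, (∑ i, x b s (i, j)) * (vS j (s j) + α * tau (K' j) (vS j) (g j) (s j))
      = (∑ i, ∑ j, x b s (i, j) * (vB i (b i) - vS j (s j)))
        + α * ((∑ i, phi (K i) (vB i) (f i) (b i) * ∑ j, x b s (i, j))
          - ∑ j, tau (K' j) (vS j) (g j) (s j) * ∑ i, x b s (i, j)) := by
    intro b s
    have hsum1 : ∑ i, (∑ j, x b s (i, j)) * (vB i (b i) + α * phi (K i) (vB i) (f i) (b i))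
        = (∑ i, (∑ j, x b s (i, j)) * vB i (b i))
          + α * ∑ i, phi (K i) (vB i) (f i) (b i) * ∑ j, x b s (i, j) := by
      rw [Finset.mul_sum, ← Finset.sum_add_distrib]
      exact Finset.sum_congr rfl fun i _ => by ring
    have hsum2 : ∑ j, (∑ i, x b s (i, j)) * (vS j (s j) + α * tau (K' j) (vS j) (g j) (s j))
        = (∑ j, (∑ i, x b s (i, j)) * vS j (s j))
          + α * ∑ j, tau (K' j) (vS j) (g j) (s j) * ∑ i, x b s (i, j) := by
      rw [Finset.mul_sum, ← Finset.sum_add_distrib]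
      exact Finset.sum_congr rfl fun j _ => by ring
    have hsum3 : ∑ i, ∑ j, x b s (i, j) * (vB i (b i) - vS j (s j))
        = (∑ i, (∑ j, x b s (i, j)) * vB i (b i))
          - ∑ j, (∑ i, x b s (i, j)) * vS j (s j) := by
      have e1 : ∀ i, ∑ j, x b s (i, j) * (vB i (b i) - vS j (s j))
          = (∑ j, x b s (i, j)) * vB i (b i) - ∑ j, x b s (i, j) * vS j (s j) := by
        intro i
        rw [Finset.sum_mul, ← Finset.sum_sub_distrib]
        exact Finset.sum_congr rfl fun j _ => by ring
      simp_rw [e1]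
      rw [Finset.sum_sub_distrib]
      congr 1
      rw [Finset.sum_comm]
      exact Finset.sum_congr rfl fun j _ => (Finset.sum_mul _ _ _).symm
    rw [hsum1, hsum2, hsum3]; ring
  have hEq : Ex f g (fun b s =>
      (∑ i, (∑ j, x b s (i, j)) * (vB i (b i) + α * phi (K i) (vB i) (f i) (b i)))
        - ∑ j, (∑ i, x b s (i, j)) * (vS j (s j) + α * tau (K' j) (vS j) (g j) (s j)))
      = Ex f g (fun b s => ∑ i, ∑ j, x b s (i, j) * (vB i (b i) - vS j (s j)))
        + α * Ex f g (fun b s =>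
          (∑ i, phi (K i) (vB i) (f i) (b i) * ∑ j, x b s (i, j))
            - ∑ j, tau (K' j) (vS j) (g j) (s j) * ∑ i, x b s (i, j)) := by
    rw [Ex_congr f g hptw, Ex_add, Ex_smul]
  have hGV : Ex f g (fun b s => ∑ i, ∑ j, x b s (i, j) * (vB i (b i) - vS j (s j)))
      ≤ Ex f g (fun b s =>
        (∑ i, (∑ j, x b s (i, j)) * (vB i (b i) + α * phi (K i) (vB i) (f i) (b i)))
          - ∑ j, (∑ i, x b s (i, j)) * (vS j (s j) + α * tau (K' j) (vS j) (g j) (s j))) := by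
    rw [hEq]
    nlinarith [mul_nonneg hα hkey]
  have hmem : Ex f g (fun b s =>
      (∑ i, (∑ j, x b s (i, j)) * (vB i (b i) + α * phi (K i) (vB i) (f i) (b i)))
        - ∑ j, (∑ i, x b s (i, j)) * (vS j (s j) + α * tau (K' j) (vS j) (g j) (s j)))
      ∈ {y : ℝ | ∃ x' : ProfileB K → ProfileS K' → Fin n × Fin m → ℝ,
          Implementable F x' ∧
          y = Ex f g (fun b s =>
            (∑ i, (∑ j, x' b s (i, j)) * (vB i (b i) + α * phi (K i) (vB i) (f i) (b i)))
              - ∑ j, (∑ i, x' b s (i, j))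
                * (vS j (s j) + α * tau (K' j) (vS j) (g j) (s j)))} :=
    ⟨x, himpl, rfl⟩
  have hbdd : BddAbove {y : ℝ | ∃ x' : ProfileB K → ProfileS K' → Fin n × Fin m → ℝ,
      Implementable F x' ∧
      y = Ex f g (fun b s =>
        (∑ i, (∑ j, x' b s (i, j)) * (vB i (b i) + α * phi (K i) (vB i) (f i) (b i)))
          - ∑ j, (∑ i, x' b s (i, j))
            * (vS j (s j) + α * tau (K' j) (vS j) (g j) (s j)))} := by
    set C0 : ℝ := (∑ i, (m : ℝ) * ∑ t, |vB i t + α * phi (K i) (vB i) (f i) t|)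
        + ∑ j, (n : ℝ) * ∑ t, |vS j t + α * tau (K' j) (vS j) (g j) t| with hC0
    refine ⟨C0, ?_⟩
    rintro y ⟨x', hx', rfl⟩
    have hb := impl_bounds hx'
    have hpt : ∀ b s,
        (∑ i, (∑ j, x' b s (i, j)) * (vB i (b i) + α * phi (K i) (vB i) (f i) (b i)))
          - ∑ j, (∑ i, x' b s (i, j)) * (vS j (s j) + α * tau (K' j) (vS j) (g j) (s j))
        ≤ C0 := by
      intro b s
      have t1 : ∑ i, (∑ j, x' b s (i, j)) * (vB i (b i) + α * phi (K i) (vB i) (f i) (b i))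
          ≤ ∑ i, (m : ℝ) * ∑ t, |vB i t + α * phi (K i) (vB i) (f i) t| := by
        apply Finset.sum_le_sum
        intro i _
        have hA0 : 0 ≤ ∑ j, x' b s (i, j) :=
          Finset.sum_nonneg fun j _ => (hb b s (i, j)).1
        have hAm : ∑ j, x' b s (i, j) ≤ (m : ℝ) := by
          calc ∑ j, x' b s (i, j) ≤ ∑ _j : Fin m, (1 : ℝ) :=
                Finset.sum_le_sum fun j _ => (hb b s (i, j)).2
            _ = m := by simp
        have habs : |vB i (b i) + α * phi (K i) (vB i) (f i) (b i)|
            ≤ ∑ t, |vB i t + α * phi (K i) (vB i) (f i) t| :=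
          Finset.single_le_sum (f := fun t => |vB i t + α * phi (K i) (vB i) (f i) t|)
            (fun t _ => abs_nonneg _) (Finset.mem_univ (b i))
        calc (∑ j, x' b s (i, j)) * (vB i (b i) + α * phi (K i) (vB i) (f i) (b i))
            ≤ (∑ j, x' b s (i, j)) * |vB i (b i) + α * phi (K i) (vB i) (f i) (b i)| :=
              mul_le_mul_of_nonneg_left (le_abs_self _) hA0
          _ ≤ (m : ℝ) * |vB i (b i) + α * phi (K i) (vB i) (f i) (b i)| :=
              mul_le_mul_of_nonneg_right hAm (abs_nonneg _)
          _ ≤ (m : ℝ) * ∑ t, |vB i t + α * phi (K i) (vB i) (f i) t| :=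
              mul_le_mul_of_nonneg_left habs (by positivity)
      have t2 : -(∑ j, (∑ i, x' b s (i, j)) * (vS j (s j) + α * tau (K' j) (vS j) (g j) (s j)))
          ≤ ∑ j, (n : ℝ) * ∑ t, |vS j t + α * tau (K' j) (vS j) (g j) t| := by
        have step : ∀ j ∈ (univ : Finset (Fin m)),
            -((∑ i, x' b s (i, j)) * (vS j (s j) + α * tau (K' j) (vS j) (g j) (s j)))
            ≤ (n : ℝ) * ∑ t, |vS j t + α * tau (K' j) (vS j) (g j) t| := by
          intro j _
          have hA0 : 0 ≤ ∑ i, x' b s (i, j) :=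
            Finset.sum_nonneg fun i _ => (hb b s (i, j)).1
          have hAn : ∑ i, x' b s (i, j) ≤ (n : ℝ) := by
            calc ∑ i, x' b s (i, j) ≤ ∑ _i : Fin n, (1 : ℝ) :=
                  Finset.sum_le_sum fun i _ => (hb b s (i, j)).2
              _ = n := by simp
          have habs : |vS j (s j) + α * tau (K' j) (vS j) (g j) (s j)|
              ≤ ∑ t, |vS j t + α * tau (K' j) (vS j) (g j) t| :=
            Finset.single_le_sum (f := fun t => |vS j t + α * tau (K' j) (vS j) (g j) t|)
              (fun t _ => abs_nonneg _) (Finset.mem_univ (s j))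
          calc -((∑ i, x' b s (i, j)) * (vS j (s j) + α * tau (K' j) (vS j) (g j) (s j)))
              = (∑ i, x' b s (i, j)) * (-(vS j (s j) + α * tau (K' j) (vS j) (g j) (s j))) := by
                ring
            _ ≤ (∑ i, x' b s (i, j)) * |vS j (s j) + α * tau (K' j) (vS j) (g j) (s j)| :=
                mul_le_mul_of_nonneg_left (neg_le_abs _) hA0
            _ ≤ (n : ℝ) * |vS j (s j) + α * tau (K' j) (vS j) (g j) (s j)| :=
                mul_le_mul_of_nonneg_right hAn (abs_nonneg _)
            _ ≤ (n : ℝ) * ∑ t, |vS j t + α * tau (K' j) (vS j) (g j) t| :=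
                mul_le_mul_of_nonneg_left habs (by positivity)
        have := Finset.sum_le_sum step
        rw [Finset.sum_neg_distrib] at this
        exact this
      linarith [t1, t2]
    calc Ex f g (fun b s =>
        (∑ i, (∑ j, x' b s (i, j)) * (vB i (b i) + α * phi (K i) (vB i) (f i) (b i)))
          - ∑ j, (∑ i, x' b s (i, j)) * (vS j (s j) + α * tau (K' j) (vS j) (g j) (s j)))
        ≤ Ex f g (fun _ _ => C0) := Ex_mono f g hf hg _ _ hpt
      _ = C0 := Ex_const f g hf1 hg1 C0
  exact hGV.trans (le_csSup hbdd hmem)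

end Stmt5
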